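/- arXiv:1201.3270 — 3 statements merged into one kernel-verified Lean document; each statement's English description precedes it below -/
import Mathlib

section
/- Let γ₁ > 2 and γ₂ ∈ (0,1), and set φ(s) := (1+s)^{−γ₁−2γ₂} and β(s) := (1+s)^{−γ₁−γ₂} for s ≥ 0, with ψ(s) := s·β(s). Then: (i) β²(s)/φ(s) = (1+s)^{−γ₁} ≤ (1+s)^{−γ₁} for all s ≥ 0, so condition (balance) holds with D₁ = 1; (ii) φ(s) ≥ C₁(1+s)^{l₁} and β(s) ≤ C₂(1+s)^{l₂} hold with suitable C₁, C₂ > 0 and l₁ = −γ₁−2γ₂, l₂ = −γ₁−γ₂; (iii) there exist s₀ > 1, a > 0, μ ∈ (0,1) and b > 0 such that G(s) ≤ a·s·(ln s)^μ for all s ≥ s₀ and H(s) ≤ b·s/ln s for all s ≥ s₀, where G(s) := ∫_{s₀}^s ∫_{s₀}^σ φ(τ)/ψ(τ) dτ dσ and H(s) := ∫_0^s σφ(σ)/ψ(σ) dσ. -/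
open MeasureTheory Real Set

noncomputable section

/-- `G(s) := ∫_{s₀}^s ∫_{s₀}^σ φ(τ)/ψ(τ) dτ dσ`. -/
def Gfun (φ ψ : ℝ → ℝ) (s₀ : ℝ) (s : ℝ) : ℝ :=
  ∫ σ in s₀..s, ∫ τ in s₀..σ, φ τ / ψ τ

/-- `H(s) := ∫_0^s σ φ(σ)/ψ(σ) dσ`. -/
def Hfun (φ ψ : ℝ → ℝ) (s : ℝ) : ℝ := ∫ σ in (0:ℝ)..s, σ * φ σ / ψ σ

/-- The example diffusion coefficient `φ(s) = (1+s)^{−γ₁−2γ₂}`. -/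
def φex (γ₁ γ₂ : ℝ) : ℝ → ℝ := fun s => (1 + s) ^ (-(γ₁ + 2 * γ₂))

/-- The example sensitivity coefficient `β(s) = (1+s)^{−γ₁−γ₂}`. -/
def βex (γ₁ γ₂ : ℝ) : ℝ → ℝ := fun s => (1 + s) ^ (-(γ₁ + γ₂))

/-- `ψ(s) = s β(s)`. -/
def ψex (γ₁ γ₂ : ℝ) : ℝ → ℝ := fun s => s * βex γ₁ γ₂ s

/-!
Everything reduces to `φ(τ)/ψ(τ) = (1+τ)^{-γ₂}/τ`. For `τ ≥ s₀ ≥ 1` this is at most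
`τ^{-γ₂-1}`, so the inner integral of `G` stays below `1/γ₂` and `G(s) ≤ s/γ₂`. For `H` the
integrand is `(1+σ)^{-γ₂} ≤ σ^{-γ₂}`, so `H(s) ≤ s^{1-γ₂}/(1-γ₂)`, and `log s ≤ s^{γ₂}/γ₂`
turns this into `H(s) ≤ s/(γ₂(1-γ₂) log s)`.
-/

lemma βex_sq_div_φex (γ₁ γ₂ : ℝ) {s : ℝ} (hs : 0 < 1 + s) :
    βex γ₁ γ₂ s ^ 2 / φex γ₁ γ₂ s = (1 + s) ^ (-γ₁) := by
  rw [sq, βex, φex, ← rpow_add hs, ← rpow_sub hs]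
  ring_nf

lemma φex_div_ψex (γ₁ γ₂ : ℝ) {τ : ℝ} (hτ : τ ≠ 0) (h1τ : 0 < 1 + τ) :
    φex γ₁ γ₂ τ / ψex γ₁ γ₂ τ = (1 + τ) ^ (-γ₂) / τ := by
  have hβ : βex γ₁ γ₂ τ ≠ 0 := (rpow_pos_of_pos h1τ _).ne'
  have hφ : φex γ₁ γ₂ τ = (1 + τ) ^ (-γ₂) * βex γ₁ γ₂ τ := by
    rw [φex, βex, ← rpow_add h1τ]
    ring_nf
  rw [hφ, ψex]
  field_simp

lemma continuousOn_φex_div_ψex (γ₁ γ₂ : ℝ) :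
    ContinuousOn (fun τ => φex γ₁ γ₂ τ / ψex γ₁ γ₂ τ) (Ioi 0) := by
  have h : ContinuousOn (fun τ : ℝ => (1 + τ) ^ (-γ₂) / τ) (Ioi 0) := by
    refine ContinuousOn.div ?_ continuousOn_id fun τ hτ => ne_of_gt hτ
    refine (continuousOn_const.add continuousOn_id).rpow_const fun τ hτ => Or.inl ?_
    have hτ : (0:ℝ) < τ := hτ
    show 1 + τ ≠ 0
    positivity
  refine h.congr fun τ hτ => ?_
  have hτ : (0:ℝ) < τ := hτ
  exact φex_div_ψex γ₁ γ₂ hτ.ne' (by linarith)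

lemma integral_rpow_neg_sub_one_le {γ a b : ℝ} (hγ : 0 < γ) (ha : 0 < a) (hab : a ≤ b) :
    ∫ τ in a..b, τ ^ (-γ - 1) ≤ a ^ (-γ) / γ := by
  have h0 : (0:ℝ) ∉ uIcc a b := by
    rw [uIcc_of_le hab, mem_Icc]
    intro h
    linarith [h.1]
  rw [integral_rpow (Or.inr ⟨by linarith, h0⟩), show -γ - 1 + 1 = -γ by ring,
    div_neg, ← neg_div, neg_sub]
  have hb : 0 ≤ b ^ (-γ) := rpow_nonneg (ha.le.trans hab) _
  gcongr
  linarith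

lemma Gfun_le_of_integral_le {φ ψ : ℝ → ℝ} {s₀ s M : ℝ} (hs : s₀ ≤ s)
    (hcont : ContinuousOn (fun τ => φ τ / ψ τ) (Icc s₀ s))
    (hM : ∀ σ ∈ Icc s₀ s, ∫ τ in s₀..σ, φ τ / ψ τ ≤ M) :
    Gfun φ ψ s₀ s ≤ (s - s₀) * M := by
  have hint : IntegrableOn (fun τ => φ τ / ψ τ) (uIcc s₀ s) := by
    rw [uIcc_of_le hs]
    exact hcont.integrableOn_compact isCompact_Icc
  have hprim : IntervalIntegrable (fun σ => ∫ τ in s₀..σ, φ τ / ψ τ) volume s₀ s :=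
    (intervalIntegral.continuousOn_primitive_interval hint).intervalIntegrable
  calc Gfun φ ψ s₀ s ≤ ∫ _ in s₀..s, M :=
        intervalIntegral.integral_mono_on hs hprim intervalIntegrable_const hM
    _ = (s - s₀) * M := by simp

lemma integral_φex_div_ψex_le (γ₁ : ℝ) {γ₂ s₀ σ : ℝ} (hγ₂ : 0 < γ₂) (hs₀ : 0 < s₀)
    (hσ : s₀ ≤ σ) : ∫ τ in s₀..σ, φex γ₁ γ₂ τ / ψex γ₁ γ₂ τ ≤ s₀ ^ (-γ₂) / γ₂ := by
  have hsub : uIcc s₀ σ ⊆ Ioi 0 := by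
    rw [uIcc_of_le hσ]
    exact fun τ hτ => hs₀.trans_le hτ.1
  have hratio : IntervalIntegrable (fun τ => φex γ₁ γ₂ τ / ψex γ₁ γ₂ τ) volume s₀ σ :=
    ((continuousOn_φex_div_ψex γ₁ γ₂).mono hsub).intervalIntegrable
  have hpow : IntervalIntegrable (fun τ : ℝ => τ ^ (-γ₂ - 1)) volume s₀ σ :=
    (continuousOn_id.rpow_const fun τ hτ => Or.inl (hsub hτ).ne').intervalIntegrable
  refine le_trans (intervalIntegral.integral_mono_on hσ hratio hpow fun τ hτ => ?_)
    (integral_rpow_neg_sub_one_le hγ₂ hs₀ hσ)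
  have hτ : 0 < τ := hs₀.trans_le hτ.1
  rw [φex_div_ψex γ₁ γ₂ hτ.ne' (by linarith : 0 < 1 + τ), rpow_sub hτ, rpow_one]
  exact div_le_div_of_nonneg_right (rpow_le_rpow_of_nonpos hτ (by linarith) (by linarith)) hτ.le

lemma Gfun_φex_ψex_le (γ₁ : ℝ) {γ₂ s₀ s : ℝ} (hγ₂ : 0 < γ₂) (hs₀ : 1 ≤ s₀) (hs : s₀ ≤ s) :
    Gfun (φex γ₁ γ₂) (ψex γ₁ γ₂) s₀ s ≤ s / γ₂ := by
  have hs₀pos : 0 < s₀ := by linarith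
  have hcont := (continuousOn_φex_div_ψex γ₁ γ₂).mono fun τ (hτ : τ ∈ Icc s₀ s) =>
    hs₀pos.trans_le hτ.1
  have hinner : ∀ σ ∈ Icc s₀ s, ∫ τ in s₀..σ, φex γ₁ γ₂ τ / ψex γ₁ γ₂ τ ≤ 1 / γ₂ := by
    intro σ hσ
    refine (integral_φex_div_ψex_le γ₁ hγ₂ hs₀pos hσ.1).trans ?_
    gcongr
    exact rpow_le_one_of_one_le_of_nonpos hs₀ (by linarith)
  calc Gfun (φex γ₁ γ₂) (ψex γ₁ γ₂) s₀ s ≤ (s - s₀) * (1 / γ₂) :=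
        Gfun_le_of_integral_le hs hcont hinner
    _ ≤ s * (1 / γ₂) := by gcongr; linarith
    _ = s / γ₂ := by ring

lemma Hfun_φex_ψex_le (γ₁ : ℝ) {γ₂ s : ℝ} (hγ₂ : γ₂ ∈ Ioo (0:ℝ) 1) (hs : 0 ≤ s) :
    Hfun (φex γ₁ γ₂) (ψex γ₁ γ₂) s ≤ s ^ (1 - γ₂) / (1 - γ₂) := by
  obtain ⟨hγ₂0, hγ₂1⟩ := hγ₂
  -- the integrands differ only at `σ = 0`
  have hH : Hfun (φex γ₁ γ₂) (ψex γ₁ γ₂) s = ∫ σ in (0:ℝ)..s, (1 + σ) ^ (-γ₂) := by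
    refine intervalIntegral.integral_congr_ae (Filter.Eventually.of_forall fun σ hσ => ?_)
    rw [uIoc_of_le hs] at hσ
    have hσ : 0 < σ := hσ.1
    rw [mul_div_assoc, φex_div_ψex γ₁ γ₂ hσ.ne' (by linarith)]
    field_simp
  have hcont : IntervalIntegrable (fun σ : ℝ => (1 + σ) ^ (-γ₂)) volume 0 s := by
    refine ContinuousOn.intervalIntegrable ?_
    refine (continuousOn_const.add continuousOn_id).rpow_const fun σ hσ => Or.inl ?_
    rw [uIcc_of_le hs] at hσ
    have : (0:ℝ) ≤ σ := hσ.1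
    show 1 + σ ≠ 0
    positivity
  have hpow : IntervalIntegrable (fun σ : ℝ => σ ^ (-γ₂)) volume 0 s :=
    intervalIntegral.intervalIntegrable_rpow' (by linarith)
  calc Hfun (φex γ₁ γ₂) (ψex γ₁ γ₂) s = ∫ σ in (0:ℝ)..s, (1 + σ) ^ (-γ₂) := hH
    _ ≤ ∫ σ in (0:ℝ)..s, σ ^ (-γ₂) :=
        intervalIntegral.integral_mono_on_of_le_Ioo hs hcont hpow fun σ hσ =>
          rpow_le_rpow_of_nonpos hσ.1 (by linarith) (by linarith)
    _ = s ^ (1 - γ₂) / (1 - γ₂) := by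
        rw [integral_rpow (Or.inl (by linarith)), show -γ₂ + 1 = 1 - γ₂ by ring,
          zero_rpow (by linarith), sub_zero]

lemma rpow_one_sub_mul_log_le {γ s : ℝ} (hγ : 0 < γ) (hs : 0 ≤ s) :
    s ^ (1 - γ) * log s ≤ s / γ := by
  calc s ^ (1 - γ) * log s ≤ s ^ (1 - γ) * (s ^ γ / γ) := by
        gcongr
        exact log_le_rpow_div hs hγ
    _ = s ^ (1 - γ + γ) / γ := by rw [rpow_add' hs (by norm_num)]; ring
    _ = s / γ := by norm_num

lemma Hfun_φex_ψex_le_div_log (γ₁ : ℝ) {γ₂ s : ℝ} (hγ₂ : γ₂ ∈ Ioo (0:ℝ) 1) (hs : 1 < s) :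
    Hfun (φex γ₁ γ₂) (ψex γ₁ γ₂) s ≤ 1 / (γ₂ * (1 - γ₂)) * s / log s := by
  have h1γ₂ : 0 < 1 - γ₂ := by linarith [hγ₂.2]
  rw [le_div_iff₀ (log_pos hs)]
  calc Hfun (φex γ₁ γ₂) (ψex γ₁ γ₂) s * log s ≤ s ^ (1 - γ₂) / (1 - γ₂) * log s := by
        gcongr
        · exact (log_pos hs).le
        · exact Hfun_φex_ψex_le γ₁ hγ₂ (by linarith)
    _ = s ^ (1 - γ₂) * log s / (1 - γ₂) := by ring
    _ ≤ s / γ₂ / (1 - γ₂) := by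
        gcongr
        exact rpow_one_sub_mul_log_le hγ₂.1 (by linarith)
    _ = 1 / (γ₂ * (1 - γ₂)) * s := by field_simp

theorem example_satisfies_balance_phibeta_G1_H1_general
    (γ₁ γ₂ : ℝ) (hγ₂ : γ₂ ∈ Ioo (0:ℝ) 1) :
    (∀ s ≥ (0:ℝ),
        (βex γ₁ γ₂ s) ^ 2 / φex γ₁ γ₂ s = (1 + s) ^ (-γ₁) ∧
        (βex γ₁ γ₂ s) ^ 2 / φex γ₁ γ₂ s ≤ 1 * (1 + s) ^ (-γ₁)) ∧
    (∃ C₁ > (0:ℝ), ∃ C₂ > (0:ℝ), ∀ s ≥ (0:ℝ),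
        C₁ * (1 + s) ^ (-(γ₁ + 2 * γ₂)) ≤ φex γ₁ γ₂ s ∧
        βex γ₁ γ₂ s ≤ C₂ * (1 + s) ^ (-(γ₁ + γ₂))) ∧
    (∃ s₀ > (1:ℝ), ∃ a > (0:ℝ), ∃ μ ∈ Ioo (0:ℝ) 1, ∃ b > (0:ℝ),
        (∀ s ≥ s₀, Gfun (φex γ₁ γ₂) (ψex γ₁ γ₂) s₀ s ≤ a * s * Real.log s ^ μ) ∧
        (∀ s ≥ s₀, Hfun (φex γ₁ γ₂) (ψex γ₁ γ₂) s ≤ b * s / Real.log s)) := by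
  have hγ₂0 : 0 < γ₂ := hγ₂.1
  have h1γ₂ : 0 < 1 - γ₂ := by linarith [hγ₂.2]
  have he : 1 < exp 1 := by linarith [add_one_le_exp 1]
  refine ⟨fun s hs => ?_, ⟨1, one_pos, 1, one_pos, fun s _ => by simp [φex, βex]⟩,
    exp 1, he, 1 / γ₂, by positivity, 1 / 2, ⟨by norm_num, by norm_num⟩,
    1 / (γ₂ * (1 - γ₂)), by positivity, fun s hs => ?_, fun s hs =>
    Hfun_φex_ψex_le_div_log γ₁ hγ₂ (he.trans_le hs)⟩
  · rw [one_mul, βex_sq_div_φex γ₁ γ₂ (by linarith)]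
    exact ⟨rfl, le_rfl⟩
  · have hlog : 1 ≤ log s ^ (1 / 2 : ℝ) :=
      one_le_rpow ((log_exp 1).symm.le.trans (log_le_log (exp_pos 1) hs)) (by norm_num)
    calc Gfun (φex γ₁ γ₂) (ψex γ₁ γ₂) (exp 1) s ≤ s / γ₂ :=
          Gfun_φex_ψex_le γ₁ hγ₂0 he.le hs
      _ = 1 / γ₂ * s * 1 := by ring
      _ ≤ 1 / γ₂ * s * log s ^ (1 / 2 : ℝ) := by
          have : 0 < s := by linarith
          gcongr

/-- Remark 1.5 of the paper: for `γ₁ > 2`, `γ₂ ∈ (0,1)` and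
`φ(s) = (1+s)^{−γ₁−2γ₂}`, `β(s) = (1+s)^{−γ₁−γ₂}`, conditions (balance), (phibeta),
(G1) and (H1) all hold. -/
theorem example_satisfies_balance_phibeta_G1_H1
    (γ₁ γ₂ : ℝ) (hγ₁ : 2 < γ₁) (hγ₂ : γ₂ ∈ Ioo (0:ℝ) 1) :
    (∀ s ≥ (0:ℝ),
        (βex γ₁ γ₂ s) ^ 2 / φex γ₁ γ₂ s = (1 + s) ^ (-γ₁) ∧
        (βex γ₁ γ₂ s) ^ 2 / φex γ₁ γ₂ s ≤ 1 * (1 + s) ^ (-γ₁)) ∧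
    (∃ C₁ > (0:ℝ), ∃ C₂ > (0:ℝ), ∀ s ≥ (0:ℝ),
        C₁ * (1 + s) ^ (-(γ₁ + 2 * γ₂)) ≤ φex γ₁ γ₂ s ∧
        βex γ₁ γ₂ s ≤ C₂ * (1 + s) ^ (-(γ₁ + γ₂))) ∧
    (∃ s₀ > (1:ℝ), ∃ a > (0:ℝ), ∃ μ ∈ Ioo (0:ℝ) 1, ∃ b > (0:ℝ),
        (∀ s ≥ s₀, Gfun (φex γ₁ γ₂) (ψex γ₁ γ₂) s₀ s ≤ a * s * Real.log s ^ μ) ∧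
        (∀ s ≥ s₀, Hfun (φex γ₁ γ₂) (ψex γ₁ γ₂) s ≤ b * s / Real.log s)) :=
  example_satisfies_balance_phibeta_G1_H1_general γ₁ γ₂ hγ₂
end
end

section
/- Let R > 0, δ ∈ (0, 2/R), and let v ∈ C¹([0,R]). Then for every r ∈ (0,R): ∫_0^r e^{δ(r−ρ)} ρ² (v²)'(ρ) dρ ≤ r² v²(r). -/
/-!
Integrate by parts against the weight `u ρ = e^{δ(r-ρ)} ρ²`, which vanishes at `0` and equals `r²`
at `r`. The remaining term is `-∫ u' v²` with `u' ρ = e^{δ(r-ρ)} (2ρ - δρ²)`, and `2ρ ≥ δρ²` on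
`[0, R]` because `δR < 2`, so this term is nonpositive.
-/

open MeasureTheory Real Set

theorem intervalIntegral.integral_mul_deriv_le_of_deriv_nonneg {a b : ℝ} (hab : a ≤ b)
    {u u' w w' : ℝ → ℝ}
    (hu : ∀ x ∈ uIcc a b, HasDerivAt u (u' x) x) (hw : ∀ x ∈ uIcc a b, HasDerivAt w (w' x) x)
    (hu'i : IntervalIntegrable u' volume a b) (hw'i : IntervalIntegrable w' volume a b)
    (hu'_nonneg : ∀ x ∈ Icc a b, 0 ≤ u' x) (hw_nonneg : ∀ x ∈ Icc a b, 0 ≤ w x) :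
    ∫ x in a..b, u x * w' x ≤ u b * w b - u a * w a := by
  rw [intervalIntegral.integral_mul_deriv_eq_deriv_mul hu hw hu'i hw'i]
  exact sub_le_self _ <| intervalIntegral.integral_nonneg hab fun x hx =>
    mul_nonneg (hu'_nonneg x hx) (hw_nonneg x hx)

theorem hasDerivAt_exp_mul_sub_mul_sq (δ r x : ℝ) :
    HasDerivAt (fun ρ => exp (δ * (r - ρ)) * ρ ^ 2)
      (exp (δ * (r - x)) * (2 * x - δ * x ^ 2)) x := by
  have hexp : HasDerivAt (fun ρ => exp (δ * (r - ρ))) (exp (δ * (r - x)) * (-δ)) x := by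
    simpa using (((hasDerivAt_id x).const_sub r).const_mul δ).exp
  refine (hexp.fun_mul (hasDerivAt_pow 2 x)).congr_deriv ?_
  push_cast
  ring

/-- For `R > 0`, `δ ∈ (0, 2/R)` and `v ∈ C¹([0,R])` (with derivative `v'`),
for every `r ∈ (0,R)` one has `∫_0^r e^{δ(r−ρ)} ρ² (v²)'(ρ) dρ ≤ r² v(r)²`. -/
theorem radial_weighted_square_estimate
    (R : ℝ) (hR : 0 < R) (δ : ℝ) (hδ : δ ∈ Ioo (0 : ℝ) (2 / R))
    (v v' : ℝ → ℝ)
    (hv : ∀ ρ ∈ Icc (0 : ℝ) R, HasDerivAt v (v' ρ) ρ)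
    (hv' : ContinuousOn v' (Icc (0 : ℝ) R)) :
    ∀ r ∈ Ioo (0 : ℝ) R,
      (∫ ρ in (0:ℝ)..r, Real.exp (δ * (r - ρ)) * ρ ^ 2 * (2 * v ρ * v' ρ))
        ≤ r ^ 2 * v r ^ 2 := by
  rintro r ⟨hr0, hrR⟩
  have hδR : δ * R < 2 := (lt_div_iff₀ hR).mp hδ.2
  have hsub : uIcc 0 r ⊆ Icc 0 R := by
    rw [uIcc_of_le hr0.le]; exact Icc_subset_Icc_right hrR.le
  have hv_sq : ∀ x ∈ uIcc 0 r, HasDerivAt (fun ρ => v ρ ^ 2) (2 * v x * v' x) x := fun x hx => by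
    simpa [mul_comm, mul_assoc] using (hv x (hsub hx)).fun_pow 2
  have hv_cont : ContinuousOn v (uIcc 0 r) := fun x hx =>
    (hv x (hsub hx)).continuousAt.continuousWithinAt
  have hweight_nonneg : ∀ x ∈ Icc 0 r, 0 ≤ exp (δ * (r - x)) * (2 * x - δ * x ^ 2) :=
    fun x ⟨hx0, hxr⟩ => mul_nonneg (exp_pos _).le <| by
      nlinarith [mul_le_mul_of_nonneg_left (hxr.trans hrR.le) hδ.1.le]
  have key := intervalIntegral.integral_mul_deriv_le_of_deriv_nonneg hr0.le
    (fun x _ => hasDerivAt_exp_mul_sub_mul_sq δ r x) hv_sq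
    (by apply Continuous.intervalIntegrable; fun_prop)
    ((continuousOn_const.mul hv_cont).mul (hv'.mono hsub)).intervalIntegrable
    hweight_nonneg (fun x _ => sq_nonneg (v x))
  simpa using key
end

section
/- Let φ, ψ ∈ C²([0,∞)) satisfy φ(s) > 0 and ψ(s) = s·β(s) with β ∈ C²([0,∞)), β(s) > 0 for all s ≥ 0, and assume there are b > 0 and s₀ > 1 such that H(s) ≤ b·s/ln s for all s ≥ s₀, where H(s) := ∫_0^s σφ(σ)/ψ(σ) dσ. Let R > 0, δ > 0, m > 0, and let u ∈ C⁰([0,R]) be positive with 2π∫_0^R ρ u(ρ) dρ = m. Then there exists a constant c > 0, depending only on φ, ψ, δ and R, such that for every r₀ ∈ (0,R]: 8π e^{δR} ∫_0^{r₀} r^{−1} ∫_0^r ρ H(u(ρ)) dρ dr ≤ c·(R² + m). -/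
/-!
By Fubini, the double integral equals `∫₀^{r₀} log (r₀/ρ) ρ H(u ρ) dρ`. Young's inequality
`A B ≤ e^{A-1} + B log B` with `A = log (r₀/ρ)` and `B = H(u ρ)` bounds the integrand by
`r₀ + ρ H(u ρ) log H(u ρ)`, and the growth condition `H(s) ≤ b s / log s` gives
`H(s) log H(s) ≤ c (1 + s)`. Integrating over `(0, r₀)` leaves at most `r₀² + c (r₀²/2 + m/2π)`.
-/

open MeasureTheory Real Set

noncomputable section

theorem mul_le_exp_sub_one_add_mul_log (A : ℝ) {B : ℝ} (hB : 0 ≤ B) :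
    A * B ≤ exp (A - 1) + B * log B := by
  rcases hB.eq_or_lt with rfl | hB
  · simp [(exp_pos _).le]
  have key : A - log B ≤ exp (A - 1 - log B) := by
    linarith [add_one_le_exp (A - 1 - log B)]
  have hexp : B * exp (A - 1 - log B) = exp (A - 1) := by
    rw [exp_sub, exp_log hB]; field_simp
  nlinarith [mul_le_mul_of_nonneg_left key hB.le]

theorem mul_log_le_of_le_div_log {b s y : ℝ} (hb : 0 < b) (hs : exp 1 ≤ s) (hy : 0 ≤ y)
    (hys : y ≤ b * s / log s) : y * log y ≤ b * (1 + |log b|) * s := by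
  have hs₀ : 0 < s := (exp_pos 1).trans_le hs
  have hlogs : 1 ≤ log s := by rwa [le_log_iff_exp_le hs₀]
  rcases le_or_gt y 1 with hy₁ | hy₁
  · linarith [mul_log_nonpos hy hy₁, (by positivity : 0 ≤ b * (1 + |log b|) * s)]
  have hlogy : log y ≤ |log b| + log s :=
    calc log y ≤ log (b * s) :=
          log_le_log (by linarith) (hys.trans (div_le_self (by positivity) hlogs))
      _ = log b + log s := log_mul hb.ne' hs₀.ne'
      _ ≤ |log b| + log s := by gcongr; exact le_abs_self _
  calc y * log y ≤ b * s / log s * (|log b| + log s) :=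
        mul_le_mul hys hlogy (log_nonneg hy₁.le) (by positivity)
    _ = b * s * |log b| / log s + b * s := by field_simp
    _ ≤ b * s * |log b| + b * s := by gcongr; exact div_le_self (by positivity) hlogs
    _ = b * (1 + |log b|) * s := by ring

theorem exists_mul_log_le_of_le_div_log {H : ℝ → ℝ} {b s₀ : ℝ} (hb : 0 < b)
    (hH : ContinuousOn H (Ici 0)) (hH₀ : ∀ s ≥ 0, 0 ≤ H s)
    (hHb : ∀ s ≥ s₀, H s ≤ b * s / log s) :
    ∃ c ≥ 0, ∀ s ≥ 0, H s * log (H s) ≤ c * (1 + s) := by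
  set s₁ := max s₀ (exp 1)
  obtain ⟨M, hM⟩ := (isCompact_Icc (a := 0) (b := s₁)).exists_bound_of_continuousOn
    (continuous_mul_log.comp_continuousOn (hH.mono Icc_subset_Ici_self))
  refine ⟨max M (b * (1 + |log b|)), by positivity, fun s hs => ?_⟩
  rcases le_or_gt s s₁ with hss₁ | hss₁
  · calc H s * log (H s) ≤ M := (le_abs_self _).trans (hM s ⟨hs, hss₁⟩)
      _ ≤ max M (b * (1 + |log b|)) := le_max_left _ _
      _ ≤ max M (b * (1 + |log b|)) * (1 + s) := by
          apply le_mul_of_one_le_right (by positivity); linarith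
  · have hs₀ : s₀ ≤ s := (le_max_left _ _).trans hss₁.le
    calc H s * log (H s) ≤ b * (1 + |log b|) * s :=
          mul_log_le_of_le_div_log hb ((le_max_right _ _).trans hss₁.le) (hH₀ s hs) (hHb s hs₀)
      _ ≤ max M (b * (1 + |log b|)) * (1 + s) :=
          mul_le_mul (le_max_right _ _) (by linarith) hs (by positivity)

theorem integral_inv_mul_integral_eq_integral_log_div_mul {g : ℝ → ℝ} {r₀ : ℝ} (hr₀ : 0 ≤ r₀)
    (hg : IntegrableOn g (Ioc 0 r₀)) :
    ∫ r in 0..r₀, r⁻¹ * ∫ ρ in 0..r, ρ * g ρ = ∫ ρ in 0..r₀, log (r₀ / ρ) * (ρ * g ρ) := by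
  set μ := volume.restrict (Ioc (0 : ℝ) r₀)
  set F : ℝ → ℝ → ℝ := fun r ρ => (Iic r).indicator (fun ρ => r⁻¹ * (ρ * g ρ)) ρ with hF
  have hFint : Integrable (Function.uncurry F) (μ.prod μ) := by
    refine (hg.comp_snd μ).norm.mono' ?_ ?_
    · refine AEStronglyMeasurable.indicator ?_ (measurableSet_le measurable_snd measurable_fst)
      exact (measurable_fst.inv.aestronglyMeasurable).mul
        (measurable_snd.aestronglyMeasurable.mul hg.aestronglyMeasurable.comp_snd)
    · -- on `ρ ≤ r` the kernel `ρ / r` is at most one, so `|g ρ|` dominates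
      rw [Measure.prod_restrict]
      filter_upwards [ae_restrict_mem (measurableSet_Ioc.prod measurableSet_Ioc)]
        with ⟨r, ρ⟩ ⟨hr, hρ⟩
      simp only [Function.uncurry_apply_pair, hF, indicator, mem_Iic]
      split_ifs with hρr
      · rw [norm_mul, norm_mul, ← mul_assoc, norm_inv, Real.norm_of_nonneg hr.1.le,
          Real.norm_of_nonneg hρ.1.le]
        exact mul_le_of_le_one_left (norm_nonneg _) (inv_mul_le_one_of_le₀ hρr hr.1.le)
      · simp
  have inner_r : ∀ r ∈ Ioc 0 r₀, r⁻¹ * ∫ ρ in 0..r, ρ * g ρ = ∫ ρ, F r ρ ∂μ := by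
    intro r hr
    rw [intervalIntegral.integral_of_le hr.1.le, ← integral_const_mul,
      setIntegral_indicator measurableSet_Iic, Ioc_inter_Iic, inf_eq_right.2 hr.2]
  have inner_ρ : ∀ ρ ∈ Ioc 0 r₀, ∫ r, F r ρ ∂μ = log (r₀ / ρ) * (ρ * g ρ) := by
    intro ρ hρ
    have hcut : (fun r => F r ρ) = (Ici ρ).indicator (fun r => r⁻¹ * (ρ * g ρ)) := by
      ext r; simp [hF, indicator]
    have hset : Ioc 0 r₀ ∩ Ici ρ = Icc ρ r₀ := by
      ext r
      simp only [mem_inter_iff, mem_Ioc, mem_Ici, mem_Icc]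
      constructor
      · rintro ⟨⟨-, hr⟩, hρr⟩; exact ⟨hρr, hr⟩
      · rintro ⟨hρr, hr⟩; exact ⟨⟨hρ.1.trans_le hρr, hr⟩, hρr⟩
    rw [hcut, setIntegral_indicator measurableSet_Ici, hset, integral_Icc_eq_integral_Ioc,
      ← intervalIntegral.integral_of_le hρ.2, intervalIntegral.integral_mul_const,
      integral_inv_of_pos hρ.1 (hρ.1.trans_le hρ.2)]
  calc ∫ r in 0..r₀, r⁻¹ * ∫ ρ in 0..r, ρ * g ρ
      = ∫ r, ∫ ρ, F r ρ ∂μ ∂μ := by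
        rw [intervalIntegral.integral_of_le hr₀]
        exact setIntegral_congr_fun measurableSet_Ioc inner_r
    _ = ∫ ρ, ∫ r, F r ρ ∂μ ∂μ := integral_integral_swap hFint
    _ = ∫ ρ in 0..r₀, log (r₀ / ρ) * (ρ * g ρ) := by
        rw [intervalIntegral.integral_of_le hr₀]
        exact setIntegral_congr_fun measurableSet_Ioc inner_ρ

theorem integral_log_div_mul_le {h u : ℝ → ℝ} {c r₀ : ℝ} (hr₀ : 0 ≤ r₀)
    (hu : IntervalIntegrable (fun ρ => ρ * u ρ) volume 0 r₀) (hh : ∀ ρ ∈ Ioc 0 r₀, 0 ≤ h ρ)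
    (hhu : ∀ ρ ∈ Ioc 0 r₀, h ρ * log (h ρ) ≤ c * (1 + u ρ)) :
    ∫ ρ in 0..r₀, log (r₀ / ρ) * (ρ * h ρ) ≤
      r₀ ^ 2 + c * (r₀ ^ 2 / 2 + ∫ ρ in 0..r₀, ρ * u ρ) := by
  have hbound : ∀ ρ ∈ Ioc 0 r₀, log (r₀ / ρ) * (ρ * h ρ) ≤ r₀ + c * (ρ + ρ * u ρ) := by
    rintro ρ ⟨hρ, hρr₀⟩
    have hexp : ρ * exp (log (r₀ / ρ) - 1) ≤ r₀ := calc
      ρ * exp (log (r₀ / ρ) - 1) ≤ ρ * exp (log (r₀ / ρ)) := by gcongr; linarith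
      _ = r₀ := by rw [exp_log (div_pos (hρ.trans_le hρr₀) hρ)]; field_simp
    have := mul_le_mul_of_nonneg_left
      (mul_le_exp_sub_one_add_mul_log (log (r₀ / ρ)) (hh ρ ⟨hρ, hρr₀⟩)) hρ.le
    nlinarith [mul_le_mul_of_nonneg_left (hhu ρ ⟨hρ, hρr₀⟩) hρ.le]
  have hint : IntervalIntegrable (fun ρ => r₀ + c * (ρ + ρ * u ρ)) volume 0 r₀ :=
    intervalIntegrable_const.add ((intervalIntegral.intervalIntegrable_id.add hu).const_mul c)
  calc ∫ ρ in 0..r₀, log (r₀ / ρ) * (ρ * h ρ) ≤ ∫ ρ in 0..r₀, (r₀ + c * (ρ + ρ * u ρ)) := by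
        simp only [intervalIntegral.integral_of_le hr₀]
        refine integral_mono_of_nonneg ?_ hint.1 ?_ <;>
          filter_upwards [ae_restrict_mem measurableSet_Ioc] with ρ hρ
        · exact mul_nonneg (log_nonneg ((one_le_div hρ.1).2 hρ.2))
            (mul_nonneg hρ.1.le (hh ρ hρ))
        · exact hbound ρ hρ
    _ = r₀ ^ 2 + c * (r₀ ^ 2 / 2 + ∫ ρ in 0..r₀, ρ * u ρ) := by
        rw [intervalIntegral.integral_add intervalIntegrable_const
          ((intervalIntegral.intervalIntegrable_id.add hu).const_mul c),
          intervalIntegral.integral_const, intervalIntegral.integral_const_mul,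
          intervalIntegral.integral_add intervalIntegral.intervalIntegrable_id hu, integral_id]
        simp only [smul_eq_mul]
        ring

theorem Hfun_nonneg {φ ψ β : ℝ → ℝ} (hφ : ∀ s ≥ (0:ℝ), 0 ≤ φ s)
    (hψβ : ∀ s ≥ (0:ℝ), ψ s = s * β s) (hβ : ∀ s ≥ (0:ℝ), 0 ≤ β s) {s : ℝ} (hs : 0 ≤ s) :
    0 ≤ Hfun φ ψ s :=
  intervalIntegral.integral_nonneg hs fun σ hσ => by
    rw [hψβ σ hσ.1]
    exact div_nonneg (mul_nonneg hσ.1 (hφ σ hσ.1)) (mul_nonneg hσ.1 (hβ σ hσ.1))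

theorem continuousOn_Hfun {φ ψ β : ℝ → ℝ} (hφ : ContinuousOn φ (Ici 0))
    (hβ : ContinuousOn β (Ici 0)) (hψβ : ∀ s ≥ (0:ℝ), ψ s = s * β s) (hβ₀ : ∀ s ≥ (0:ℝ), β s ≠ 0) :
    ContinuousOn (Hfun φ ψ) (Ici 0) := by
  have hHfun : EqOn (Hfun φ ψ) (fun s => ∫ σ in 0..s, φ σ / β σ) (Ici 0) := fun s hs =>
    intervalIntegral.integral_congr_ae (Filter.Eventually.of_forall fun σ hσ => by
      rw [uIoc_of_le hs] at hσ
      rw [hψβ σ hσ.1.le, mul_div_mul_left _ _ hσ.1.ne'])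
  refine ContinuousOn.congr (fun s (hs : 0 ≤ s) => ?_) hHfun
  have hIcc : uIcc 0 (s + 1) = Icc 0 (s + 1) := uIcc_of_le (by linarith)
  have hint : IntegrableOn (fun σ => φ σ / β σ) (uIcc 0 (s + 1)) := by
    rw [hIcc]
    exact ((hφ.div hβ hβ₀).mono Icc_subset_Ici_self).integrableOn_Icc
  refine (intervalIntegral.continuousOn_primitive_interval hint s ?_).mono_of_mem_nhdsWithin ?_
  · rw [hIcc]; exact ⟨hs, by linarith⟩
  · rw [hIcc, ← Ici_inter_Iic]
    exact inter_mem_nhdsWithin _ (Iic_mem_nhds (by linarith))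

theorem double_integral_H_bound_general
    (φ ψ β : ℝ → ℝ)
    (hφC2 : ContDiffOn ℝ 2 φ (Ici 0)) (hβC2 : ContDiffOn ℝ 2 β (Ici 0))
    (hφpos : ∀ s ≥ (0:ℝ), 0 < φ s)
    (hψβ : ∀ s ≥ (0:ℝ), ψ s = s * β s)
    (hβpos : ∀ s ≥ (0:ℝ), 0 < β s)
    (b s₀ : ℝ) (hb : 0 < b)
    (hH1 : ∀ s ≥ s₀, Hfun φ ψ s ≤ b * s / Real.log s)
    (R δ : ℝ) :
    ∃ c > 0, ∀ m > (0:ℝ), ∀ u : ℝ → ℝ,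
      ContinuousOn u (Icc (0:ℝ) R) →
      (∀ ρ ∈ Icc (0:ℝ) R, 0 < u ρ) →
      2 * π * (∫ ρ in (0:ℝ)..R, ρ * u ρ) = m →
      ∀ r₀ ∈ Ioc (0:ℝ) R,
        8 * π * Real.exp (δ * R) *
            (∫ r in (0:ℝ)..r₀, r⁻¹ * ∫ ρ in (0:ℝ)..r, ρ * Hfun φ ψ (u ρ))
          ≤ c * (R ^ 2 + m) := by
  have hH := continuousOn_Hfun hφC2.continuousOn hβC2.continuousOn hψβ fun s hs => (hβpos s hs).ne'
  have hHnonneg : ∀ s ≥ (0:ℝ), 0 ≤ Hfun φ ψ s := fun s hs =>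
    Hfun_nonneg (fun s hs => (hφpos s hs).le) hψβ (fun s hs => (hβpos s hs).le) hs
  obtain ⟨c, hc, hHlog⟩ := exists_mul_log_le_of_le_div_log hb hH hHnonneg hH1
  refine ⟨8 * π * exp (δ * R) * (1 + c), by positivity, ?_⟩
  rintro m hm u hu hupos hmass r₀ ⟨hr₀, hr₀R⟩
  have hsub : Icc 0 r₀ ⊆ Icc 0 R := Icc_subset_Icc le_rfl hr₀R
  have hHu : ContinuousOn (fun ρ => Hfun φ ψ (u ρ)) (Icc 0 r₀) :=
    hH.comp (hu.mono hsub) fun ρ hρ => (hupos ρ (hsub hρ)).le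
  have hρu : IntervalIntegrable (fun ρ => ρ * u ρ) volume 0 R :=
    (continuousOn_id.mul hu).intervalIntegrable_of_Icc (hr₀.le.trans hr₀R)
  have hmass_r₀ : ∫ ρ in 0..r₀, ρ * u ρ ≤ m := by
    have hmono := intervalIntegral.integral_mono_interval le_rfl hr₀.le hr₀R
      ((ae_restrict_mem measurableSet_Ioc).mono fun ρ hρ =>
        mul_nonneg hρ.1.le (hupos ρ (Ioc_subset_Icc_self hρ)).le) hρu
    nlinarith [pi_gt_three]
  have hu₀ : ∀ ρ ∈ Ioc 0 r₀, 0 ≤ u ρ := fun ρ hρ => (hupos ρ (hsub (Ioc_subset_Icc_self hρ))).le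
  have hbound := integral_log_div_mul_le hr₀.le
    ((continuousOn_id.mul (hu.mono hsub)).intervalIntegrable_of_Icc hr₀.le)
    (fun ρ hρ => hHnonneg _ (hu₀ ρ hρ)) (fun ρ hρ => hHlog _ (hu₀ ρ hρ))
  rw [integral_inv_mul_integral_eq_integral_log_div_mul hr₀.le
    (hHu.integrableOn_Icc.mono_set Ioc_subset_Icc_self), mul_assoc _ (1 + c)]
  gcongr
  calc _ ≤ r₀ ^ 2 + c * (r₀ ^ 2 / 2 + ∫ ρ in 0..r₀, ρ * u ρ) := hbound
    _ ≤ R ^ 2 + c * (R ^ 2 + m) := by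
        have := pow_le_pow_left₀ hr₀.le hr₀R 2
        gcongr; linarith [sq_nonneg r₀]
    _ ≤ (1 + c) * (R ^ 2 + m) := by linarith

/-- the bound `8π e^{δR} ∫_0^{r₀} r^{−1} ∫_0^r ρ H(u(ρ)) dρ dr ≤ c·(R² + m)`,
with `c` depending only on `φ, ψ, δ, R` (not on `u`, `m`, `r₀`). -/
theorem double_integral_H_bound
    (φ ψ β : ℝ → ℝ)
    (hφC2 : ContDiffOn ℝ 2 φ (Ici 0)) (hψC2 : ContDiffOn ℝ 2 ψ (Ici 0))
    (hβC2 : ContDiffOn ℝ 2 β (Ici 0))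
    (hφpos : ∀ s ≥ (0:ℝ), 0 < φ s)
    (hψβ : ∀ s ≥ (0:ℝ), ψ s = s * β s)
    (hβpos : ∀ s ≥ (0:ℝ), 0 < β s)
    (b s₀ : ℝ) (hb : 0 < b) (hs₀ : 1 < s₀)
    (hH1 : ∀ s ≥ s₀, Hfun φ ψ s ≤ b * s / Real.log s)
    (R δ : ℝ) (hR : 0 < R) (hδ : 0 < δ) :
    ∃ c > 0, ∀ m > (0:ℝ), ∀ u : ℝ → ℝ,
      ContinuousOn u (Icc (0:ℝ) R) →
      (∀ ρ ∈ Icc (0:ℝ) R, 0 < u ρ) →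
      2 * π * (∫ ρ in (0:ℝ)..R, ρ * u ρ) = m →
      ∀ r₀ ∈ Ioc (0:ℝ) R,
        8 * π * Real.exp (δ * R) *
            (∫ r in (0:ℝ)..r₀, r⁻¹ * ∫ ρ in (0:ℝ)..r, ρ * Hfun φ ψ (u ρ))
          ≤ c * (R ^ 2 + m) :=
  double_integral_H_bound_general φ ψ β hφC2 hβC2 hφpos hψβ hβpos b s₀ hb hH1 R δ
end
end
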